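/- The gradient of the symmetric softmax is 1-Lipschitz from the ℓ∞ norm to the ℓ₁ norm: for all x, y ∈ ℝ^d, ‖∇lmax(x) − ∇lmax(y)‖₁ ≤ ‖x − y‖_∞. -/

import Mathlib

/-- `linf x` is the maximum absolute entry of the vector `x`, i.e. `‖x‖_∞`. -/
noncomputable def linf {ι : Type*} [Fintype ι] (x : ι → ℝ) : ℝ := ⨆ i, |x i|

/-- `l1 x` is the sum of absolute entries of the vector `x`, i.e. `‖x‖₁`. -/
def l1 {ι : Type*} [Fintype ι] (x : ι → ℝ) : ℝ := ∑ i, |x i|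

/-- The symmetric softmax: `lmax(x) = log (Σ_i (e^{x_i} + e^{-x_i}))`. -/
noncomputable def lmax {ι : Type*} [Fintype ι] (x : ι → ℝ) : ℝ :=
  Real.log (∑ i, (Real.exp (x i) + Real.exp (-x i)))

/-- The gradient of the symmetric softmax: its `i`-th component is
`(e^{x_i} − e^{-x_i}) / Σ_j (e^{x_j} + e^{-x_j})`. -/
noncomputable def lmaxGrad {ι : Type*} [Fintype ι] (x : ι → ℝ) : ι → ℝ :=
  fun i => (Real.exp (x i) - Real.exp (-x i)) / ∑ j, (Real.exp (x j) + Real.exp (-x j))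

/-!
The symmetric softmax is the log-sum-exp of the doubled vector `(x, -x)`, so `∇lmax x` is the
difference of the two halves of `softmax (x, -x)`, and it suffices to show that softmax is
1-Lipschitz from `ℓ∞` to `ℓ₁`. Testing against a sign vector `a`, the derivative of
`t ↦ ⟪a, softmax (u' + t • v)⟫` is the covariance of `a` and `v` under the probability vector
`softmax (u' + t • v)`, which Cauchy–Schwarz bounds by `‖a‖∞ ‖v‖∞ ≤ ‖v‖∞`; the mean value
theorem concludes.
-/

open Finset Real

section Norms

variable {ι : Type*} [Fintype ι]

lemma abs_le_linf (x : ι → ℝ) (i : ι) : |x i| ≤ linf x :=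
  le_ciSup (f := fun i => |x i|) (Set.finite_range _).bddAbove i

lemma linf_nonneg (x : ι → ℝ) : 0 ≤ linf x :=
  Real.iSup_nonneg fun i => abs_nonneg (x i)

lemma linf_le {x : ι → ℝ} {C : ℝ} (hC : 0 ≤ C) (h : ∀ i, |x i| ≤ C) : linf x ≤ C :=
  Real.iSup_le h hC

lemma linf_sumElim_neg (v : ι → ℝ) : linf (Sum.elim v (-v)) = linf v := by
  apply le_antisymm
  · refine linf_le (linf_nonneg v) ?_
    rintro (i | i)
    · exact abs_le_linf v i
    · simpa using abs_le_linf v i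
  · exact linf_le (linf_nonneg _) fun i => abs_le_linf (Sum.elim v (-v)) (Sum.inl i)

lemma sum_sign_mul_eq_l1 (x : ι → ℝ) : ∑ i, (SignType.sign (x i) : ℝ) * x i = l1 x := by
  simp [l1]

lemma abs_sign_le_one (r : ℝ) : |(SignType.sign r : ℝ)| ≤ 1 := by
  rcases SignType.sign r with _ | _ | _ <;> simp

end Norms

section Covariance

variable {κ : Type*} [Fintype κ]

def weightedCov (w a b : κ → ℝ) : ℝ :=
  ∑ k, w k * a k * b k - (∑ k, w k * a k) * ∑ k, w k * b k

lemma weightedCov_eq_sum_sub_mul (w a b : κ → ℝ) :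
    weightedCov w a b = ∑ k, w k * (a k - ∑ j, w j * a j) * b k := by
  rw [weightedCov, mul_sum]
  simp only [mul_sub, sub_mul, sum_sub_distrib]
  congr 1
  exact sum_congr rfl fun k _ => by ring

lemma sum_mul_sub_sq_le_sum_mul_sq {w a : κ → ℝ} (hw1 : ∑ k, w k = 1) :
    ∑ k, w k * (a k - ∑ j, w j * a j) ^ 2 ≤ ∑ k, w k * a k ^ 2 := by
  set ā := ∑ j, w j * a j
  have hexpand : ∑ k, w k * (a k - ā) ^ 2 = ∑ k, w k * a k ^ 2 - ā ^ 2 := by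
    have h : ∀ k, w k * (a k - ā) ^ 2 = w k * a k ^ 2 - 2 * ā * (w k * a k) + ā ^ 2 * w k :=
      fun k => by ring
    simp only [h, sum_add_distrib, sum_sub_distrib, ← mul_sum, hw1]
    ring
  linarith [sq_nonneg ā]

lemma sum_mul_sq_le_of_abs_le {w b : κ → ℝ} {B : ℝ} (hw : ∀ k, 0 ≤ w k) (hw1 : ∑ k, w k = 1)
    (hb : ∀ k, |b k| ≤ B) : ∑ k, w k * b k ^ 2 ≤ B ^ 2 :=
  calc ∑ k, w k * b k ^ 2 ≤ ∑ k, w k * B ^ 2 := sum_le_sum fun k _ =>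
        mul_le_mul_of_nonneg_left (sq_le_sq.2 ((hb k).trans (le_abs_self B))) (hw k)
    _ = B ^ 2 := by rw [← sum_mul, hw1, one_mul]

theorem abs_weightedCov_le {w a b : κ → ℝ} {A B : ℝ} (hw : ∀ k, 0 ≤ w k)
    (hw1 : ∑ k, w k = 1) (ha : ∀ k, |a k| ≤ A) (hb : ∀ k, |b k| ≤ B) :
    |weightedCov w a b| ≤ A * B := by
  obtain ⟨k₀⟩ : Nonempty κ := by
    by_contra hκ
    simp [not_nonempty_iff.mp hκ] at hw1
  have hA : 0 ≤ A := (abs_nonneg _).trans (ha k₀)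
  have hB : 0 ≤ B := (abs_nonneg _).trans (hb k₀)
  set ā := ∑ j, w j * a j
  have hcs : weightedCov w a b ^ 2 ≤ (∑ k, w k * (a k - ā) ^ 2) * ∑ k, w k * b k ^ 2 := by
    rw [weightedCov_eq_sum_sub_mul]
    exact sum_sq_le_sum_mul_sum_of_sq_le_mul _ (fun k _ => mul_nonneg (hw k) (sq_nonneg _))
      (fun k _ => mul_nonneg (hw k) (sq_nonneg _)) fun k _ => le_of_eq (by ring)
  have hvar : ∑ k, w k * (a k - ā) ^ 2 ≤ A ^ 2 :=
    (sum_mul_sub_sq_le_sum_mul_sq hw1).trans (sum_mul_sq_le_of_abs_le hw hw1 ha)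
  refine abs_le_of_sq_le_sq ?_ (mul_nonneg hA hB)
  calc weightedCov w a b ^ 2 ≤ (∑ k, w k * (a k - ā) ^ 2) * ∑ k, w k * b k ^ 2 := hcs
    _ ≤ A ^ 2 * B ^ 2 := mul_le_mul hvar (sum_mul_sq_le_of_abs_le hw hw1 hb)
        (sum_nonneg fun k _ => mul_nonneg (hw k) (sq_nonneg _)) (sq_nonneg A)
    _ = (A * B) ^ 2 := by ring

end Covariance

section Softmax

variable {κ : Type*} [Fintype κ]

noncomputable def softmax (u : κ → ℝ) : κ → ℝ := fun k => exp (u k) / ∑ j, exp (u j)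

lemma softmax_nonneg (u : κ → ℝ) (k : κ) : 0 ≤ softmax u k := by
  unfold softmax; positivity

lemma sum_softmax [Nonempty κ] (u : κ → ℝ) : ∑ k, softmax u k = 1 := by
  simp only [softmax, ← sum_div]
  exact div_self (sum_pos (fun k _ => exp_pos (u k)) univ_nonempty).ne'

lemma hasDerivAt_sum_mul_softmax_line [Nonempty κ] (a u v : κ → ℝ) (t : ℝ) :
    HasDerivAt (fun s : ℝ => ∑ k, a k * softmax (u + s • v) k)
      (weightedCov (softmax (u + t • v)) a v) t := by
  set e : ℝ → κ → ℝ := fun s k => exp (u k + s * v k)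
  have he : ∀ k, HasDerivAt (fun s => e s k) (e t k * v k) t := fun k => by
    simpa using (((hasDerivAt_id t).mul_const (v k)).const_add (u k)).exp
  have hE : HasDerivAt (fun s => ∑ k, e s k) (∑ k, e t k * v k) t :=
    HasDerivAt.fun_sum fun k _ => he k
  have hN : HasDerivAt (fun s => ∑ k, e s k * a k) (∑ k, e t k * a k * v k) t :=
    HasDerivAt.fun_sum fun k _ => ((he k).mul_const (a k)).congr_deriv (by ring)
  have hpos : 0 < ∑ k, e t k := sum_pos (fun k _ => exp_pos _) univ_nonempty
  have hsoftmax : ∀ s, softmax (u + s • v) = fun k => e s k / ∑ j, e s j := fun s => by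
    funext k
    simp [softmax, e]
  have hquot : (fun s => ∑ k, a k * softmax (u + s • v) k)
      = fun s => (∑ k, e s k * a k) / ∑ k, e s k := by
    funext s
    simp only [hsoftmax, sum_div]
    exact sum_congr rfl fun k _ => by ring
  rw [hquot]
  refine (hN.div hE hpos.ne').congr_deriv ?_
  simp only [hsoftmax, weightedCov, div_mul_eq_mul_div, ← sum_div]
  field_simp

lemma abs_sum_mul_softmax_sub_le [Nonempty κ] {a : κ → ℝ} (ha : ∀ k, |a k| ≤ 1)
    (u u' : κ → ℝ) : |∑ k, a k * (softmax u k - softmax u' k)| ≤ linf (u - u') := by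
  have hmvt := norm_image_sub_le_of_norm_deriv_le_segment_01'
    (f := fun s : ℝ => ∑ k, a k * softmax (u' + s • (u - u')) k)
    (fun t _ => (hasDerivAt_sum_mul_softmax_line a u' (u - u') t).hasDerivWithinAt)
    fun t _ => (abs_weightedCov_le (softmax_nonneg _) (sum_softmax _) ha
      (abs_le_linf (u - u'))).trans_eq (one_mul _)
  simpa [mul_sub, sum_sub_distrib] using hmvt

theorem l1_softmax_sub_le (u u' : κ → ℝ) : l1 (softmax u - softmax u') ≤ linf (u - u') := by
  rcases isEmpty_or_nonempty κ with hκ | hκ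
  · simpa [l1] using linf_nonneg (u - u')
  · rw [← sum_sign_mul_eq_l1]
    exact (le_abs_self _).trans
      (abs_sum_mul_softmax_sub_le (fun k => abs_sign_le_one _) u u')

end Softmax

section SymmetricSoftmax

variable {ι : Type*} [Fintype ι]

lemma lmaxGrad_eq_softmax_sub (x : ι → ℝ) (i : ι) :
    lmaxGrad x i =
      softmax (Sum.elim x (-x)) (Sum.inl i) - softmax (Sum.elim x (-x)) (Sum.inr i) := by
  simp [lmaxGrad, softmax, Fintype.sum_sum_type, sum_add_distrib, sub_div]

lemma l1_lmaxGrad_sub_le (x y : ι → ℝ) :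
    l1 (lmaxGrad x - lmaxGrad y) ≤
      l1 (softmax (Sum.elim x (-x)) - softmax (Sum.elim y (-y))) := by
  rw [l1, l1, Fintype.sum_sum_type, ← sum_add_distrib]
  gcongr with i
  simp only [Pi.sub_apply, lmaxGrad_eq_softmax_sub]
  rw [sub_sub_sub_comm]
  exact abs_sub _ _

end SymmetricSoftmax

theorem lmaxGrad_lipschitz_general {d : ℕ} (x y : Fin d → ℝ) :
    l1 (fun i => lmaxGrad x i - lmaxGrad y i) ≤ linf (fun i => x i - y i) := by
  have hsub : Sum.elim x (-x) - Sum.elim y (-y) = Sum.elim (x - y) (-(x - y)) := by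
    ext (i | i) <;> simp; ring
  calc l1 (lmaxGrad x - lmaxGrad y)
      ≤ l1 (softmax (Sum.elim x (-x)) - softmax (Sum.elim y (-y))) := l1_lmaxGrad_sub_le x y
    _ ≤ linf (Sum.elim x (-x) - Sum.elim y (-y)) := l1_softmax_sub_le _ _
    _ = linf (x - y) := by rw [hsub, linf_sumElim_neg]

/-- The gradient of the symmetric softmax is 1-Lipschitz from `‖·‖_∞` to `‖·‖₁`:
`‖∇lmax(x) − ∇lmax(y)‖₁ ≤ ‖x − y‖_∞`. -/
theorem lmaxGrad_lipschitz {d : ℕ} (hd : 1 ≤ d) (x y : Fin d → ℝ) :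
    l1 (fun i => lmaxGrad x i - lmaxGrad y i) ≤ linf (fun i => x i - y i) :=
  lmaxGrad_lipschitz_general x y
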